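/- Let p, q ≥ 1 and n = p·q. Let x ∈ ℝⁿ be partitioned into q blocks x_j ∈ ℝᵖ (j = 0,…,q−1, each block indexed cyclically by ZMod p), and for i, j ∈ {0,…,q−1} let c_{i,j} ∈ ℝᵖ. Let B be the block circulant matrix whose (i,j) block is circ(c_{i,j}), let h = B·x, so the i-th block of h is h_i = Σ_{j} circ(c_{i,j})·x_j, and let f : ℝⁿ → ℝ be differentiable at h. Define g({c_{i,j}}) = f(B·x). Then for every block position (i,j), min over k ∈ ZMod p of the partial derivative of g with respect to (c_{i,j})_k, which equals Σ_{m ∈ ZMod p} ((∇f(h))_i)_m · (x_j)_{m-k}, is at least p · (min over all (r, s) with r ∈ {0,…,n−1}, s ∈ {0,…,n−1} of (∇f(h))_r · x_s), i.e. at least p times the smallest entry of the dense-matrix gradient ∇f(h)·xᵀ. -/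

import Mathlib

/-!
For fixed `x`, the parameters enter `B·x` linearly, so by the chain rule the `(i, j, k)` entry
of the gradient of `g` is `⟪∇f(h), B_{ijk} x⟫`, where `B_{ijk}` is the block circulant matrix of
the corresponding basis vector; `B_{ijk} x` is the copy of `x_j` shifted by `k`, placed in block `i`.
That inner product is a sum of `p` entries of the dense gradient `∇f(h)·xᵀ`, hence at least `p`
times the smallest one.
-/

open Gradient

theorem inner_gradient_comp_continuousLinearMap {𝕜 E F : Type*} [RCLike 𝕜]
    [NormedAddCommGroup E] [InnerProductSpace 𝕜 E] [CompleteSpace E]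
    [NormedAddCommGroup F] [InnerProductSpace 𝕜 F] [CompleteSpace F]
    {f : F → 𝕜} (L : E →L[𝕜] F) {x : E} (hf : DifferentiableAt 𝕜 f (L x)) (v : E) :
    inner 𝕜 (∇ (f ∘ L) x) v = inner 𝕜 (∇ f (L x)) (L v) := by
  rw [inner_gradient_left, inner_gradient_left, fderiv_comp x hf L.differentiableAt, L.fderiv]
  rfl

theorem EuclideanSpace.gradient_comp_continuousLinearMap_apply {ι κ : Type*}
    [Fintype ι] [DecidableEq ι] [Fintype κ] {f : EuclideanSpace ℝ κ → ℝ}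
    (L : EuclideanSpace ℝ ι →L[ℝ] EuclideanSpace ℝ κ) {x : EuclideanSpace ℝ ι}
    (hf : DifferentiableAt ℝ f (L x)) (a : ι) :
    ∇ (f ∘ L) x a = ∑ b, ∇ f (L x) b * L (EuclideanSpace.single a 1) b := by
  have := inner_gradient_comp_continuousLinearMap L hf (EuclideanSpace.single a 1)
  rw [EuclideanSpace.inner_single_right, PiLp.inner_apply] at this
  simpa [mul_comm] using this

section BlockCirculant

variable {ι G : Type*} [Fintype ι] [Fintype G] [AddCommGroup G]

noncomputable def blockCirculantMap (x : EuclideanSpace ℝ (ι × G)) :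
    EuclideanSpace ℝ (ι × ι × G) →L[ℝ] EuclideanSpace ℝ (ι × G) :=
  LinearMap.toContinuousLinearMap
    { toFun := fun c => WithLp.toLp 2 fun im => ∑ j, ∑ k, c (im.1, j, im.2 - k) * x (j, k)
      map_add' := fun a b => by ext; simp [add_mul, Finset.sum_add_distrib]
      map_smul' := fun r a => by ext; simp [Finset.mul_sum, mul_assoc] }

theorem blockCirculantMap_apply (x : EuclideanSpace ℝ (ι × G))
    (c : EuclideanSpace ℝ (ι × ι × G)) (i : ι) (m : G) :
    blockCirculantMap x c (i, m) = ∑ j, ∑ k, c (i, j, m - k) * x (j, k) := rfl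

variable [DecidableEq ι] [DecidableEq G]

theorem blockCirculantMap_single (x : EuclideanSpace ℝ (ι × G)) (i j i' : ι) (k m : G) :
    blockCirculantMap x (EuclideanSpace.single (i, j, k) 1) (i', m)
      = if i' = i then x (j, m - k) else 0 := by
  have hk (k' : G) : m - k' = k ↔ k' = m - k := by
    rw [sub_eq_iff_eq_add, ← sub_eq_iff_eq_add', eq_comm]
  by_cases hi : i' = i <;>
    simp [hi, blockCirculantMap_apply, PiLp.single_apply, hk, ite_and]

theorem gradient_comp_blockCirculantMap_apply {f : EuclideanSpace ℝ (ι × G) → ℝ}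
    (x : EuclideanSpace ℝ (ι × G)) {c : EuclideanSpace ℝ (ι × ι × G)}
    (hf : DifferentiableAt ℝ f (blockCirculantMap x c)) (i j : ι) (k : G) :
    ∇ (f ∘ blockCirculantMap x) c (i, j, k)
      = ∑ m, ∇ f (blockCirculantMap x c) (i, m) * x (j, m - k) := by
  simp [EuclideanSpace.gradient_comp_continuousLinearMap_apply _ hf, Fintype.sum_prod_type,
    blockCirculantMap_single]

end BlockCirculant

theorem block_circulant_gradient_min_ge_general (p q : ℕ) [NeZero p] [NeZero q]
    (x h : EuclideanSpace ℝ (ZMod q × ZMod p))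
    (C : EuclideanSpace ℝ (ZMod q × ZMod q × ZMod p))
    (hh : ∀ (i : ZMod q) (m : ZMod p),
      h (i, m) = ∑ j : ZMod q, ∑ k : ZMod p, C (i, j, m - k) * x (j, k))
    (f : EuclideanSpace ℝ (ZMod q × ZMod p) → ℝ)
    (hf : DifferentiableAt ℝ f h)
    (i j : ZMod q) :
    (∀ k : ZMod p,
        gradient (fun C' : EuclideanSpace ℝ (ZMod q × ZMod q × ZMod p) =>
            f (WithLp.toLp 2 (fun im : ZMod q × ZMod p =>
              ∑ j' : ZMod q, ∑ k' : ZMod p, C' (im.1, j', im.2 - k') * x (j', k')))) C (i, j, k)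
          = ∑ m : ZMod p, gradient f h (i, m) * x (j, m - k)) ∧
      Finset.univ.inf' Finset.univ_nonempty
          (fun k : ZMod p =>
            gradient (fun C' : EuclideanSpace ℝ (ZMod q × ZMod q × ZMod p) =>
              f (WithLp.toLp 2 (fun im : ZMod q × ZMod p =>
                ∑ j' : ZMod q, ∑ k' : ZMod p, C' (im.1, j', im.2 - k') * x (j', k')))) C (i, j, k))
        ≥ (p : ℝ) * Finset.univ.inf' Finset.univ_nonempty
          (fun rs : (ZMod q × ZMod p) × (ZMod q × ZMod p) =>
            gradient f h rs.1 * x rs.2) := by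
  have hC : blockCirculantMap x C = h := by
    ext ⟨i', m⟩
    exact (hh i' m).symm
  have hgrad (k : ZMod p) : ∇ (f ∘ blockCirculantMap x) C (i, j, k)
      = ∑ m, ∇ f h (i, m) * x (j, m - k) := by
    rw [gradient_comp_blockCirculantMap_apply x (hC ▸ hf), hC]
  refine ⟨hgrad, Finset.le_inf' _ _ fun k _ => ?_⟩
  have hsum : (Finset.univ : Finset (ZMod p)).card • Finset.univ.inf' Finset.univ_nonempty
      (fun rs : (ZMod q × ZMod p) × (ZMod q × ZMod p) => ∇ f h rs.1 * x rs.2)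
        ≤ ∑ m, ∇ f h (i, m) * x (j, m - k) :=
    Finset.card_nsmul_le_sum _ _ _ fun m _ =>
      Finset.inf'_le _ (Finset.mem_univ ((i, m), (j, m - k)))
  rw [Finset.card_univ, ZMod.card, nsmul_eq_mul] at hsum
  exact hsum.trans_eq (hgrad k).symm

/-- Block circulant case, `n = p·q`. Vectors are indexed by
`ZMod q × ZMod p` (block index, position inside block); the parameters `c_{i,j} ∈ ℝᵖ`
are flattened into `C : ℝ^{q×q×p}`. With `h = B·x` where `B` is the block circulant
matrix with blocks `circ(c_{i,j})` (so `h_{(i,m)} = Σ_j Σ_k C_{(i,j,m-k)}·x_{(j,k)}`),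
and `f` differentiable at `h`, for every block position `(i,j)`: each partial
derivative of `g(C) = f(B·x)` in `(c_{i,j})_k` equals `Σ_m (∇f(h))_{(i,m)}·x_{(j,m-k)}`,
and its minimum over `k` is at least `p` times the smallest entry of the dense
gradient `∇f(h)·xᵀ`. -/
theorem block_circulant_gradient_min_ge (p q : ℕ) [NeZero p] [NeZero q]
    (n : ℕ) (hn : n = p * q)
    (x h : EuclideanSpace ℝ (ZMod q × ZMod p))
    (C : EuclideanSpace ℝ (ZMod q × ZMod q × ZMod p))
    (hh : ∀ (i : ZMod q) (m : ZMod p),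
      h (i, m) = ∑ j : ZMod q, ∑ k : ZMod p, C (i, j, m - k) * x (j, k))
    (f : EuclideanSpace ℝ (ZMod q × ZMod p) → ℝ)
    (hf : DifferentiableAt ℝ f h)
    (i j : ZMod q) :
    (∀ k : ZMod p,
        gradient (fun C' : EuclideanSpace ℝ (ZMod q × ZMod q × ZMod p) =>
            f (WithLp.toLp 2 (fun im : ZMod q × ZMod p =>
              ∑ j' : ZMod q, ∑ k' : ZMod p, C' (im.1, j', im.2 - k') * x (j', k')))) C (i, j, k)
          = ∑ m : ZMod p, gradient f h (i, m) * x (j, m - k)) ∧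
      Finset.univ.inf' Finset.univ_nonempty
          (fun k : ZMod p =>
            gradient (fun C' : EuclideanSpace ℝ (ZMod q × ZMod q × ZMod p) =>
              f (WithLp.toLp 2 (fun im : ZMod q × ZMod p =>
                ∑ j' : ZMod q, ∑ k' : ZMod p, C' (im.1, j', im.2 - k') * x (j', k')))) C (i, j, k))
        ≥ (p : ℝ) * Finset.univ.inf' Finset.univ_nonempty
          (fun rs : (ZMod q × ZMod p) × (ZMod q × ZMod p) =>
            gradient f h rs.1 * x rs.2) :=
  block_circulant_gradient_min_ge_general p q x h C hh f hf i j
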